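/- (Deterministic Frobenius bound from Theorem 6.) Under the hypotheses of the previous statement, (1/p)‖Ω̂ − Ω₀‖_F² ≤ 4‖Ω₀‖_{L₁} · C₄ · s₀ λ^{2−q}, where C₄ = 2(1 + 2^{1−q} + 3^{1−q})(4‖Ω₀‖_{L₁})^{1−q}. -/

import Mathlib

/-!
The ℓ₁-minimal columns of Ω̂₁ are no longer than those of Ω₀, since Ω₀ itself is feasible.
Writing Ω̂₁ - Ω₀ = Ω₀ (Σ₀ Ω̂₁ - I) then gives the entrywise bound |Ω̂ - Ω₀|_∞ ≤ θ := 2‖Ω₀‖_{L₁} λ,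
which the symmetrization preserves. Entry by entry,
|Ω̂ - Ω₀| ≤ 2 min(|Ω₀|, θ) + (|Ω̂₁| - |Ω₀|); summing over a column, the ℓ₁-minimality kills the
last term and min(x, θ) ≤ θ^{1-q} x^q turns the first into 2 θ^{1-q} s₀.
Finally ‖A‖_F² ≤ p ‖A‖_{L₁} |A|_∞.
-/

open scoped BigOperators

/-- Elementwise sup norm of a real matrix. -/
noncomputable def elemSupNorm {p q : ℕ} (A : Matrix (Fin p) (Fin q) ℝ) : ℝ :=
  ⨆ i, ⨆ j, |A i j|

/-- Matrix ℓ₁ norm: maximum absolute column sum. -/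
noncomputable def matL1Norm {p q : ℕ} (A : Matrix (Fin p) (Fin q) ℝ) : ℝ :=
  ⨆ j, ∑ i, |A i j|

open scoped Matrix

section MatrixNorms

variable {l m n : ℕ}

theorem abs_le_elemSupNorm (A : Matrix (Fin m) (Fin n) ℝ) (i : Fin m) (j : Fin n) :
    |A i j| ≤ elemSupNorm A :=
  (le_ciSup (Set.finite_range fun j => |A i j|).bddAbove j).trans
    (le_ciSup (f := fun i => ⨆ j, |A i j|) (Set.finite_range _).bddAbove i)

theorem elemSupNorm_nonneg (A : Matrix (Fin m) (Fin n) ℝ) : 0 ≤ elemSupNorm A :=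
  Real.iSup_nonneg fun _ => Real.iSup_nonneg fun _ => abs_nonneg _

theorem elemSupNorm_le {A : Matrix (Fin m) (Fin n) ℝ} {c : ℝ} (h : ∀ i j, |A i j| ≤ c)
    (hc : 0 ≤ c) : elemSupNorm A ≤ c :=
  Real.iSup_le (fun i => Real.iSup_le (h i) hc) hc

theorem elemSupNorm_transpose (A : Matrix (Fin m) (Fin n) ℝ) :
    elemSupNorm Aᵀ = elemSupNorm A :=
  le_antisymm (elemSupNorm_le (fun i j => abs_le_elemSupNorm A j i) (elemSupNorm_nonneg A))
    (elemSupNorm_le (fun i j => abs_le_elemSupNorm Aᵀ j i) (elemSupNorm_nonneg Aᵀ))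

theorem elemSupNorm_sub_le (A B : Matrix (Fin m) (Fin n) ℝ) :
    elemSupNorm (A - B) ≤ elemSupNorm A + elemSupNorm B :=
  elemSupNorm_le
    (fun i j => (abs_sub _ _).trans
      (add_le_add (abs_le_elemSupNorm A i j) (abs_le_elemSupNorm B i j)))
    (add_nonneg (elemSupNorm_nonneg A) (elemSupNorm_nonneg B))

theorem sum_abs_le_matL1Norm (A : Matrix (Fin m) (Fin n) ℝ) (j : Fin n) :
    ∑ i, |A i j| ≤ matL1Norm A :=
  le_ciSup (f := fun j => ∑ i, |A i j|) (Set.finite_range _).bddAbove j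

theorem matL1Norm_nonneg (A : Matrix (Fin m) (Fin n) ℝ) : 0 ≤ matL1Norm A :=
  Real.iSup_nonneg fun j => Finset.sum_nonneg fun i (_ : i ∈ Finset.univ) => abs_nonneg (A i j)

theorem matL1Norm_le {A : Matrix (Fin m) (Fin n) ℝ} {c : ℝ} (h : ∀ j, ∑ i, |A i j| ≤ c)
    (hc : 0 ≤ c) : matL1Norm A ≤ c :=
  Real.iSup_le h hc

theorem elemSupNorm_mul_le (A : Matrix (Fin l) (Fin m) ℝ) (B : Matrix (Fin m) (Fin n) ℝ) :
    elemSupNorm (A * B) ≤ elemSupNorm A * matL1Norm B := by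
  refine elemSupNorm_le (fun i j => ?_) (mul_nonneg (elemSupNorm_nonneg A) (matL1Norm_nonneg B))
  calc |(A * B) i j| ≤ ∑ k, |A i k| * |B k j| := by
        simpa only [Matrix.mul_apply, abs_mul] using
          Finset.abs_sum_le_sum_abs (fun k => A i k * B k j) Finset.univ
    _ ≤ ∑ k, elemSupNorm A * |B k j| :=
        Finset.sum_le_sum fun k _ =>
          mul_le_mul_of_nonneg_right (abs_le_elemSupNorm A i k) (abs_nonneg _)
    _ = elemSupNorm A * ∑ k, |B k j| := (Finset.mul_sum _ _ _).symm
    _ ≤ elemSupNorm A * matL1Norm B :=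
        mul_le_mul_of_nonneg_left (sum_abs_le_matL1Norm B j) (elemSupNorm_nonneg A)

theorem elemSupNorm_mul_le' (A : Matrix (Fin l) (Fin m) ℝ) (B : Matrix (Fin m) (Fin n) ℝ) :
    elemSupNorm (A * B) ≤ matL1Norm Aᵀ * elemSupNorm B := by
  rw [← elemSupNorm_transpose, Matrix.transpose_mul, mul_comm, ← elemSupNorm_transpose B]
  exact elemSupNorm_mul_le Bᵀ Aᵀ

theorem sum_sq_le_mul_matL1Norm_mul_elemSupNorm (A : Matrix (Fin m) (Fin n) ℝ) :
    ∑ i, ∑ j, A i j ^ 2 ≤ n * (matL1Norm A * elemSupNorm A) := by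
  calc ∑ i, ∑ j, A i j ^ 2 ≤ ∑ i, ∑ j, |A i j| * elemSupNorm A :=
        Finset.sum_le_sum fun i _ => Finset.sum_le_sum fun j _ => by
          rw [← sq_abs, sq]
          exact mul_le_mul_of_nonneg_left (abs_le_elemSupNorm A i j) (abs_nonneg _)
    _ = ∑ j, (∑ i, |A i j|) * elemSupNorm A := by
        rw [Finset.sum_comm]; simp only [Finset.sum_mul]
    _ ≤ ∑ _j : Fin n, matL1Norm A * elemSupNorm A :=
        Finset.sum_le_sum fun j _ =>
          mul_le_mul_of_nonneg_right (sum_abs_le_matL1Norm A j) (elemSupNorm_nonneg A)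
    _ = n * (matL1Norm A * elemSupNorm A) := by simp

theorem one_div_mul_sum_sq_le_matL1Norm_mul_elemSupNorm (A : Matrix (Fin m) (Fin n) ℝ) :
    1 / (n : ℝ) * ∑ i, ∑ j, A i j ^ 2 ≤ matL1Norm A * elemSupNorm A := by
  have hY := mul_nonneg (matL1Norm_nonneg A) (elemSupNorm_nonneg A)
  calc 1 / (n : ℝ) * ∑ i, ∑ j, A i j ^ 2 ≤ 1 / (n : ℝ) * (n * (matL1Norm A * elemSupNorm A)) :=
        mul_le_mul_of_nonneg_left (sum_sq_le_mul_matL1Norm_mul_elemSupNorm A) (by positivity)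
    _ = ((n : ℝ) / n) * (matL1Norm A * elemSupNorm A) := by ring
    _ ≤ matL1Norm A * elemSupNorm A := mul_le_of_le_one_left hY (div_self_le_one _)

end MatrixNorms

section SoftSparsity

theorem min_le_rpow_mul_rpow {x θ q : ℝ} (hx : 0 ≤ x) (hθ : 0 ≤ θ) (hq0 : 0 ≤ q) (hq1 : q ≤ 1) :
    min x θ ≤ θ ^ (1 - q) * x ^ q := by
  have hsplit : ∀ y : ℝ, 0 ≤ y → y = y ^ (1 - q) * y ^ q := fun y hy => by
    rw [← Real.rpow_add' hy (by norm_num), sub_add_cancel, Real.rpow_one]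
  rcases le_total x θ with hxθ | hθx
  · rw [min_eq_left hxθ]
    calc x = x ^ (1 - q) * x ^ q := hsplit x hx
      _ ≤ θ ^ (1 - q) * x ^ q := by gcongr
  · rw [min_eq_right hθx]
    calc θ = θ ^ (1 - q) * θ ^ q := hsplit θ hθ
      _ ≤ θ ^ (1 - q) * x ^ q := by gcongr

theorem abs_sub_le_two_mul_min_add {a b c θ : ℝ} (hb : |b - a| ≤ θ) (hc : |c - a| ≤ θ)
    (hcb : |c| ≤ |b|) : |c - a| ≤ 2 * min |a| θ + (|b| - |a|) := by
  rcases le_total |a| θ with haθ | hθa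
  · rw [min_eq_left haθ]
    linarith [abs_sub c a]
  · rw [min_eq_right hθa]
    linarith [abs_sub_abs_le_abs_sub a b, abs_sub_comm a b]

theorem sum_abs_sub_le_two_mul_sum_min {ι : Type*} [Fintype ι] {a b c : ι → ℝ} {θ : ℝ}
    (hl1 : ∑ j, |b j| ≤ ∑ j, |a j|) (hb : ∀ j, |b j - a j| ≤ θ) (hc : ∀ j, |c j - a j| ≤ θ)
    (hcb : ∀ j, |c j| ≤ |b j|) : ∑ j, |c j - a j| ≤ 2 * ∑ j, min |a j| θ := by
  calc ∑ j, |c j - a j| ≤ ∑ j, (2 * min |a j| θ + (|b j| - |a j|)) :=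
        Finset.sum_le_sum fun j _ => abs_sub_le_two_mul_min_add (hb j) (hc j) (hcb j)
    _ = 2 * ∑ j, min |a j| θ + (∑ j, |b j| - ∑ j, |a j|) := by
        rw [Finset.sum_add_distrib, Finset.sum_sub_distrib, Finset.mul_sum]
    _ ≤ 2 * ∑ j, min |a j| θ := by linarith

end SoftSparsity

theorem matL1Norm_sub_le_of_sparse {m n : ℕ} {A B C : Matrix (Fin m) (Fin n) ℝ} {θ q s : ℝ}
    (hq0 : 0 ≤ q) (hq1 : q ≤ 1) (hsparse : ∀ j, ∑ i, |A i j| ^ q ≤ s) (hs : 0 ≤ s)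
    (hl1 : ∀ j, ∑ i, |B i j| ≤ ∑ i, |A i j|) (hB : elemSupNorm (B - A) ≤ θ)
    (hC : elemSupNorm (C - A) ≤ θ) (hCB : ∀ i j, |C i j| ≤ |B i j|) :
    matL1Norm (C - A) ≤ 2 * θ ^ (1 - q) * s := by
  have hθ : 0 ≤ θ := (elemSupNorm_nonneg _).trans hC
  refine matL1Norm_le (fun j => ?_) (by positivity)
  calc ∑ i, |(C - A) i j| ≤ 2 * ∑ i, min |A i j| θ :=
        sum_abs_sub_le_two_mul_sum_min (hl1 j) (fun i => (abs_le_elemSupNorm _ i j).trans hB)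
          (fun i => (abs_le_elemSupNorm _ i j).trans hC) (fun i => hCB i j)
    _ ≤ 2 * ∑ i, θ ^ (1 - q) * |A i j| ^ q := by
        gcongr with i
        exact min_le_rpow_mul_rpow (abs_nonneg _) hθ hq0 hq1
    _ = 2 * θ ^ (1 - q) * ∑ i, |A i j| ^ q := by rw [← Finset.mul_sum, mul_assoc]
    _ ≤ 2 * θ ^ (1 - q) * s := by gcongr; exact hsparse j

section Clime

variable {p : ℕ} {Om₀ S₀ Sn Omhat1 : Matrix (Fin p) (Fin p) ℝ} {lam : ℝ}

theorem sum_abs_col_le_of_feasible {B : Matrix (Fin p) (Fin p) ℝ}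
    (hmin : ∀ i : Fin p, ∀ β : Fin p → ℝ,
      (∀ k, |Sn.mulVec β k - (if k = i then (1 : ℝ) else 0)| ≤ lam) →
        ∑ j, |Omhat1 j i| ≤ ∑ j, |β j|)
    (hB : elemSupNorm (Sn * B - 1) ≤ lam) (i : Fin p) :
    ∑ j, |Omhat1 j i| ≤ ∑ j, |B j i| :=
  hmin i (fun j => B j i) fun k => by
    simpa [Matrix.mul_apply, Matrix.one_apply, Matrix.mulVec, dotProduct] using
      (abs_le_elemSupNorm (Sn * B - 1) k i).trans hB

theorem elemSupNorm_mul_sub_one_le (hinv : S₀ * Om₀ = 1)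
    (hlam : matL1Norm Om₀ * elemSupNorm (Sn - S₀) ≤ lam) :
    elemSupNorm (Sn * Om₀ - 1) ≤ lam := by
  rw [← hinv, ← Matrix.sub_mul]
  exact (elemSupNorm_mul_le _ _).trans ((mul_comm _ _).trans_le hlam)

theorem elemSupNorm_sub_le_of_feasible (hΩsym : Om₀.IsSymm) (hinv : Om₀ * S₀ = 1)
    (hfeas : elemSupNorm (Sn * Omhat1 - 1) ≤ lam) (hL1 : matL1Norm Omhat1 ≤ matL1Norm Om₀)
    (hlam : matL1Norm Om₀ * elemSupNorm (Sn - S₀) ≤ lam) :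
    elemSupNorm (Omhat1 - Om₀) ≤ 2 * matL1Norm Om₀ * lam := by
  have hcross : elemSupNorm ((Sn - S₀) * Omhat1) ≤ lam :=
    calc elemSupNorm ((Sn - S₀) * Omhat1) ≤ elemSupNorm (Sn - S₀) * matL1Norm Omhat1 :=
          elemSupNorm_mul_le _ _
      _ ≤ elemSupNorm (Sn - S₀) * matL1Norm Om₀ :=
          mul_le_mul_of_nonneg_left hL1 (elemSupNorm_nonneg _)
      _ ≤ lam := by rw [mul_comm]; exact hlam
  have hfactor : Omhat1 - Om₀ = Om₀ * ((Sn * Omhat1 - 1) - (Sn - S₀) * Omhat1) := by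
    rw [show (Sn * Omhat1 - 1) - (Sn - S₀) * Omhat1 = S₀ * Omhat1 - 1 by noncomm_ring,
      Matrix.mul_sub, ← Matrix.mul_assoc, hinv, Matrix.one_mul, Matrix.mul_one]
  calc elemSupNorm (Omhat1 - Om₀)
        ≤ matL1Norm Om₀ * elemSupNorm ((Sn * Omhat1 - 1) - (Sn - S₀) * Omhat1) := by
        rw [hfactor]; simpa only [hΩsym.eq] using elemSupNorm_mul_le' Om₀ _
    _ ≤ matL1Norm Om₀ * (lam + lam) :=
        mul_le_mul_of_nonneg_left ((elemSupNorm_sub_le _ _).trans (add_le_add hfeas hcross))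
          (matL1Norm_nonneg _)
    _ = 2 * matL1Norm Om₀ * lam := by ring

theorem elemSupNorm_sub_le_of_pick {Omhat : Matrix (Fin p) (Fin p) ℝ} (hΩsym : Om₀.IsSymm)
    (hpick : ∀ i j, Omhat i j = Omhat1 i j ∨ Omhat i j = Omhat1 j i) :
    elemSupNorm (Omhat - Om₀) ≤ elemSupNorm (Omhat1 - Om₀) := by
  refine elemSupNorm_le (fun i j => ?_) (elemSupNorm_nonneg _)
  rcases hpick i j with h | h
  · rw [Matrix.sub_apply, h]; exact abs_le_elemSupNorm (Omhat1 - Om₀) i j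
  · rw [Matrix.sub_apply, h, ← hΩsym.apply i j]; exact abs_le_elemSupNorm (Omhat1 - Om₀) j i

end Clime

theorem clime_rate_le {M lam q s : ℝ} (hM : 0 ≤ M) (hlam : 0 ≤ lam) (hs : 0 ≤ s) (hq1 : q ≤ 1) :
    2 * (2 * M * lam) ^ (1 - q) * s * (2 * M * lam) ≤
      4 * M * (2 * (1 + 2 ^ (1 - q) + 3 ^ (1 - q)) * (4 * M) ^ (1 - q)) * s * lam ^ (2 - q) := by
  have hlam_pow : lam ^ (1 - q) * lam = lam ^ (2 - q) := by
    rw [show (2 : ℝ) - q = (1 - q) + 1 by ring, Real.rpow_add_one' hlam (by linarith)]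
  have hK : (1 : ℝ) ≤ 2 * (1 + 2 ^ (1 - q) + 3 ^ (1 - q)) := by
    have h2 : (0 : ℝ) ≤ 2 ^ (1 - q) := by positivity
    have h3 : (0 : ℝ) ≤ 3 ^ (1 - q) := by positivity
    linarith
  calc 2 * (2 * M * lam) ^ (1 - q) * s * (2 * M * lam)
        = 4 * M * (1 * (2 * M) ^ (1 - q)) * s * (lam ^ (1 - q) * lam) := by
        rw [Real.mul_rpow (by positivity) hlam]; ring
    _ ≤ 4 * M * (2 * (1 + 2 ^ (1 - q) + 3 ^ (1 - q)) * (4 * M) ^ (1 - q)) * s * lam ^ (2 - q) := by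
        rw [hlam_pow]
        gcongr
        linarith

theorem clime_frobenius_bound_general {p : ℕ}
    (Om₀ S₀ Sn Omhat1 Omhat : Matrix (Fin p) (Fin p) ℝ)
    (q s₀ lam : ℝ) (hq0 : 0 ≤ q) (hq1 : q < 1) (hs₀ : 0 ≤ s₀)
    (hΩsym : Om₀.IsSymm) (hΩpd : Om₀.PosDef)
    (hS : S₀ = Om₀⁻¹)
    (hsparse : ∀ i, ∑ j, |Om₀ i j| ^ q ≤ s₀)
    -- feasibility of Ω̂₁
    (hfeas : ∀ i j, |(Sn * Omhat1 - 1) i j| ≤ lam)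
    -- column-wise ℓ₁-minimality of Ω̂₁
    (hmin : ∀ i : Fin p, ∀ β : Fin p → ℝ,
      (∀ k, |Sn.mulVec β k - (if k = i then (1 : ℝ) else 0)| ≤ lam) →
        ∑ j, |Omhat1 j i| ≤ ∑ j, |β j|)
    -- CLIME symmetrization: Ω̂ is symmetric and each entry is the smaller-magnitude
    -- one among the (i,j) and (j,i) entries of Ω̂₁
    (hpick : ∀ i j, Omhat i j = Omhat1 i j ∨ Omhat i j = Omhat1 j i)
    (hmag : ∀ i j, |Omhat i j| ≤ |Omhat1 i j|)
    -- tuning parameter condition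
    (hlam : matL1Norm Om₀ * elemSupNorm (Sn - S₀) ≤ lam) :
    (1 / (p : ℝ)) * ∑ i, ∑ j, ((Omhat - Om₀) i j) ^ 2 ≤
      4 * matL1Norm Om₀ *
        (2 * (1 + 2 ^ (1 - q) + 3 ^ (1 - q)) * (4 * matL1Norm Om₀) ^ (1 - q)) *
        s₀ * lam ^ (2 - q) := by
  have hM : 0 ≤ matL1Norm Om₀ := matL1Norm_nonneg Om₀
  have hlam0 : 0 ≤ lam := (mul_nonneg hM (elemSupNorm_nonneg _)).trans hlam
  have hdet : IsUnit Om₀.det := hΩpd.det_pos.ne'.isUnit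
  have hcol : ∀ i, ∑ j, |Omhat1 j i| ≤ ∑ j, |Om₀ j i| :=
    sum_abs_col_le_of_feasible hmin
      (elemSupNorm_mul_sub_one_le (hS ▸ Matrix.nonsing_inv_mul Om₀ hdet) hlam)
  have hsup1 : elemSupNorm (Omhat1 - Om₀) ≤ 2 * matL1Norm Om₀ * lam :=
    elemSupNorm_sub_le_of_feasible hΩsym (hS ▸ Matrix.mul_nonsing_inv Om₀ hdet)
      (elemSupNorm_le hfeas hlam0)
      (matL1Norm_le (fun j => (hcol j).trans (sum_abs_le_matL1Norm Om₀ j)) hM)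
      hlam
  have hsup := (elemSupNorm_sub_le_of_pick hΩsym hpick).trans hsup1
  have hsparse_col : ∀ i, ∑ j, |Om₀ j i| ^ q ≤ s₀ := fun i =>
    (Finset.sum_congr rfl fun j _ => by rw [hΩsym.apply]).trans_le (hsparse i)
  have hL1 := matL1Norm_sub_le_of_sparse hq0 hq1.le hsparse_col hs₀ hcol hsup1 hsup hmag
  calc 1 / (p : ℝ) * ∑ i, ∑ j, ((Omhat - Om₀) i j) ^ 2
        ≤ matL1Norm (Omhat - Om₀) * elemSupNorm (Omhat - Om₀) :=
        one_div_mul_sum_sq_le_matL1Norm_mul_elemSupNorm _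
    _ ≤ 2 * (2 * matL1Norm Om₀ * lam) ^ (1 - q) * s₀ * (2 * matL1Norm Om₀ * lam) :=
        mul_le_mul hL1 hsup (elemSupNorm_nonneg _) (by positivity)
    _ ≤ _ := clime_rate_le hM hlam0 hs₀ hq1.le

/-- Deterministic core of Theorem 6 (Frobenius norm bound) for the CLIME estimator. -/
theorem clime_frobenius_bound {p : ℕ} (hp : 0 < p)
    (Om₀ S₀ Sn Omhat1 Omhat : Matrix (Fin p) (Fin p) ℝ)
    (q s₀ lam : ℝ) (hq0 : 0 ≤ q) (hq1 : q < 1) (hs₀ : 0 ≤ s₀)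
    (hΩsym : Om₀.IsSymm) (hΩpd : Om₀.PosDef)
    (hS : S₀ = Om₀⁻¹)
    (hsparse : ∀ i, ∑ j, |Om₀ i j| ^ q ≤ s₀)
    -- feasibility of Ω̂₁
    (hfeas : ∀ i j, |(Sn * Omhat1 - 1) i j| ≤ lam)
    -- column-wise ℓ₁-minimality of Ω̂₁
    (hmin : ∀ i : Fin p, ∀ β : Fin p → ℝ,
      (∀ k, |Sn.mulVec β k - (if k = i then (1 : ℝ) else 0)| ≤ lam) →
        ∑ j, |Omhat1 j i| ≤ ∑ j, |β j|)
    -- CLIME symmetrization: Ω̂ is symmetric and each entry is the smaller-magnitude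
    -- one among the (i,j) and (j,i) entries of Ω̂₁
    (hsym : Omhat.IsSymm)
    (hpick : ∀ i j, Omhat i j = Omhat1 i j ∨ Omhat i j = Omhat1 j i)
    (hmag : ∀ i j, |Omhat i j| ≤ |Omhat1 i j|)
    -- tuning parameter condition
    (hlam : matL1Norm Om₀ * elemSupNorm (Sn - S₀) ≤ lam) :
    (1 / (p : ℝ)) * ∑ i, ∑ j, ((Omhat - Om₀) i j) ^ 2 ≤
      4 * matL1Norm Om₀ *
        (2 * (1 + 2 ^ (1 - q) + 3 ^ (1 - q)) * (4 * matL1Norm Om₀) ^ (1 - q)) *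
        s₀ * lam ^ (2 - q) :=
  clime_frobenius_bound_general Om₀ S₀ Sn Omhat1 Omhat q s₀ lam hq0 hq1 hs₀ hΩsym hΩpd hS hsparse
    hfeas hmin hpick hmag hlam
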